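/- arXiv:2510.16431 — 2 statements merged into one kernel-verified Lean document; each statement's English description precedes it below -/
import Mathlib

section
/- For every n ≥ 1, the number of nearest-neighbor lattice walks of length 2n in the quadrant ℤ≥0 × ℤ≥0 (steps in {(1,0),(−1,0),(0,1),(0,−1)}, never leaving the quadrant) that start and end at (0,0) equals C_n · C_{n+1}, where C_k = (1/(k+1))·binom(2k,k) is the k-th Catalan number. -/
/-!
Record each step of a walk by its axis and its direction `U`/`D`. The walk is then a shuffle of
two words, that of its horizontal and that of its vertical steps, and each coordinate after `j`
steps is the height (`#U - #D`) of the part of the corresponding word read so far. Since the parts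
read so far are exactly the prefixes of each word, the walk stays in the quadrant and returns to
the origin iff both words are Dyck words. Choosing the positions of the `2k` horizontal steps gives
  `#walks = ∑_{k + l = n} C(2n, 2k) C_k C_l`.
After multiplication by `(n + 1)²` the term of index `(k, l)` becomes `C(2n, n) C(n+1, k) C(n+1, l)`,
so Vandermonde's identity turns the sum into `C(2n, n) C(2n+2, n) = (n + 1)² C_n C_{n+1}`.
-/

open Finset DyckStep
open scoped Nat

lemma List.exists_take_filterMap_eq_filterMap_take {α β : Type*} (f : α → Option β) :
    ∀ (l : List α) (k : ℕ), ∃ j, (l.filterMap f).take k = (l.take j).filterMap f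
  | [], _ => ⟨0, by simp⟩
  | a :: l, k => by
    cases ha : f a with
    | none =>
      obtain ⟨j, hj⟩ := exists_take_filterMap_eq_filterMap_take f l k
      exact ⟨j + 1, by simp [ha, hj]⟩
    | some b =>
      cases k with
      | zero => exact ⟨0, by simp⟩
      | succ k =>
        obtain ⟨j, hj⟩ := exists_take_filterMap_eq_filterMap_take f l k
        exact ⟨j + 1, by simp [ha, hj]⟩

lemma List.forall_filterMap_take_iff {α β : Type*} (f : α → Option β) (l : List α)
    (P : List β → Prop) :
    (∀ j, P ((l.take j).filterMap f)) ↔ ∀ k, P ((l.filterMap f).take k) := by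
  refine ⟨fun h k => ?_, fun h j => ?_⟩
  · obtain ⟨j, hj⟩ := exists_take_filterMap_eq_filterMap_take f l k
    exact hj ▸ h j
  · rw [prefix_iff_eq_take.mp ((take_prefix j l).filterMap f)]
    exact h _

lemma List.forall_take_fin_iff {α : Type*} {N : ℕ} {l : List α} (hl : l.length = N)
    (P : List α → Prop) : (∀ j : Fin (N + 1), P (l.take j)) ↔ ∀ j : ℕ, P (l.take j) := by
  refine ⟨fun h j => ?_, fun h j => h j⟩
  rcases le_or_gt j N with hj | hj
  · exact h ⟨j, by omega⟩
  · rw [take_of_length_le (by omega), ← take_length (l := l), hl]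
    exact h (Fin.last N)

section partialSum
variable {N : ℕ} {G α : Type*} [AddCommGroup G] {g : α → G}

lemma Fin.partialSum_comp_injective (hg : Function.Injective g) :
    Function.Injective fun c : Fin N → α => partialSum (g ∘ c) := by
  intro c c' h
  funext i
  apply hg
  simpa only [Function.comp_apply, partialSum_right_neg] using
    congrArg (fun w => -w i.castSucc + w i.succ) h

lemma Fin.exists_partialSum_comp_eq {w : Fin (N + 1) → G} (h₀ : w 0 = 0)
    (hw : ∀ i : Fin N, w i.succ - w i.castSucc ∈ Set.range g) :
    ∃ c : Fin N → α, partialSum (g ∘ c) = w := by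
  choose c hc using hw
  refine ⟨c, ?_⟩
  conv_rhs => rw [← partialSum_left_neg w, h₀, zero_vadd]
  congr 1
  funext i
  rw [Function.comp_apply, hc, neg_add_eq_sub]

end partialSum

section split
variable {X : Type*} {N : ℕ}

lemma Finset.sort_eq_filter_finRange (S : Finset (Fin N)) :
    S.sort (· ≤ ·) = (List.finRange N).filter (· ∈ S) :=
  S.sortedLT_sort.eq_of_mem_iff ((List.sortedLT_finRange N).pairwise.filter _).sortedLT (by simp)

def splitAlong (S : Finset (Fin N)) : (Fin N → X) ≃ (Fin #S → X) × (Fin #Sᶜ → X) :=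
  (Equiv.piEquivPiSubtypeProd (· ∈ S) fun _ => X).trans <|
    ((S.orderIsoOfFin rfl).symm.toEquiv.arrowCongr (Equiv.refl X)).prodCongr
      (((Equiv.subtypeEquivRight fun _ => Finset.mem_compl.symm).trans
        (Sᶜ.orderIsoOfFin rfl).symm.toEquiv).arrowCongr (Equiv.refl X))

lemma ofFn_splitAlong_fst (S : Finset (Fin N)) (d : Fin N → X) :
    List.ofFn (splitAlong S d).1 = ((List.finRange N).filter (· ∈ S)).map d := by
  rw [← S.sort_eq_filter_finRange, ← S.listMap_orderEmbOfFin_finRange rfl, List.map_map,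
    List.ofFn_eq_map]
  rfl

lemma ofFn_splitAlong_snd (S : Finset (Fin N)) (d : Fin N → X) :
    List.ofFn (splitAlong S d).2 = ((List.finRange N).filter (· ∉ S)).map d := by
  have : (List.finRange N).filter (· ∉ S) = (List.finRange N).filter (· ∈ Sᶜ) := by simp
  rw [this, ← Sᶜ.sort_eq_filter_finRange, ← Sᶜ.listMap_orderEmbOfFin_finRange rfl, List.map_map,
    List.ofFn_eq_map]
  rfl

def axisSplit : (Fin N → Bool × X) ≃ Finset (Fin N) × (Fin N → X) where
  toFun c := (({i | (c i).1} : Finset (Fin N)), fun i => (c i).2)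
  invFun p i := (decide (i ∈ p.1), p.2 i)
  left_inv c := by funext i; simp
  right_inv p := by ext <;> simp

end split

lemma Finset.sum_card_card_compl {M : Type*} [AddCommMonoid M] (N : ℕ) (f : ℕ → ℕ → M) :
    ∑ S : Finset (Fin N), f #S #Sᶜ = ∑ p ∈ antidiagonal N, N.choose p.1 • f p.1 p.2 := by
  simp only [card_compl, Fintype.card_fin]
  rw [← powerset_univ, sum_powerset_apply_card (fun m => f m (N - m)),
    Nat.sum_antidiagonal_eq_sum_range_succ_mk, card_univ, Fintype.card_fin]

lemma Finset.Nat.sum_antidiagonal_two_mul {M : Type*} [AddCommMonoid M] (f : ℕ × ℕ → M)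
    (hf : ∀ p, Odd p.1 → f p = 0) (n : ℕ) :
    ∑ p ∈ antidiagonal (2 * n), f p = ∑ p ∈ antidiagonal n, f (2 * p.1, 2 * p.2) := by
  let double : ℕ × ℕ ↪ ℕ × ℕ :=
    ⟨fun p => (2 * p.1, 2 * p.2), fun p q h => by
      simp only [Prod.mk.injEq] at h
      ext <;> omega⟩
  refine Eq.trans ?_ (sum_map (antidiagonal n) double f)
  refine (sum_subset (fun p hp => ?_) fun p hp hp' => hf p ?_).symm
  · obtain ⟨q, hq, rfl⟩ := mem_map.mp hp
    rw [HasAntidiagonal.mem_antidiagonal] at hq ⊢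
    change 2 * q.1 + 2 * q.2 = 2 * n
    omega
  · rw [HasAntidiagonal.mem_antidiagonal] at hp
    refine Nat.not_even_iff_odd.mp fun ⟨k, hk⟩ => hp' (mem_map.mpr ⟨(k, n - k), ?_, ?_⟩)
    · rw [HasAntidiagonal.mem_antidiagonal]; omega
    · change (2 * k, 2 * (n - k)) = p
      ext <;> dsimp only <;> omega

instance : Fintype DyckStep := ⟨{U, D}, fun s => by cases s <;> simp⟩

def IsDyck (l : List DyckStep) : Prop :=
  l.count U = l.count D ∧ ∀ i, (l.take i).count D ≤ (l.take i).count U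

def dyckHeight (l : List DyckStep) : ℤ := l.count U - l.count D

lemma isDyck_iff_dyckHeight {l : List DyckStep} :
    IsDyck l ↔ dyckHeight l = 0 ∧ ∀ i, 0 ≤ dyckHeight (l.take i) := by
  simp only [IsDyck, dyckHeight, sub_eq_zero, sub_nonneg]
  norm_cast

noncomputable def numDyckWords (m : ℕ) : ℕ := Nat.card {p : DyckWord // p.toList.length = m}

lemma numDyckWords_two_mul (k : ℕ) : numDyckWords (2 * k) = catalan k := by
  rw [← DyckWord.card_dyckWord_semilength_eq_catalan, ← Nat.card_eq_fintype_card]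
  exact Nat.card_congr <| Equiv.subtypeEquivRight fun p => by
    rw [← p.two_mul_semilength_eq_length]; omega

lemma numDyckWords_of_odd {m : ℕ} (hm : Odd m) : numDyckWords m = 0 := by
  refine Nat.card_eq_zero.mpr (.inl ⟨fun ⟨p, hp⟩ => Nat.not_even_iff_odd.mpr hm ?_⟩)
  exact ⟨p.semilength, by rw [← hp, ← p.two_mul_semilength_eq_length, two_mul]⟩

def dyckWordEquivIsDyck (m : ℕ) :
    {p : DyckWord // p.toList.length = m} ≃ {u : Fin m → DyckStep // IsDyck (List.ofFn u)} :=
  (show {p : DyckWord // p.toList.length = m} ≃ {v : List.Vector DyckStep m // IsDyck v.toList} from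
    { toFun p := ⟨⟨p.1.toList, p.2⟩, p.1.count_U_eq_count_D, p.1.count_D_le_count_U⟩
      invFun v := ⟨⟨v.1.1, v.2.1, v.2.2⟩, v.1.2⟩ }).trans
  ((Equiv.vectorEquivFin DyckStep m).subtypeEquiv fun v => by
    rw [show Equiv.vectorEquivFin DyckStep m v = v.get from rfl, ← List.Vector.toList_ofFn,
      List.Vector.ofFn_get])

lemma card_isDyck_ofFn (m : ℕ) :
    Nat.card {u : Fin m → DyckStep // IsDyck (List.ofFn u)} = numDyckWords m :=
  (Nat.card_congr (dyckWordEquivIsDyck m)).symm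

def unitStep : Bool × DyckStep → ℤ × ℤ
  | (true, U) => (1, 0)
  | (true, D) => (-1, 0)
  | (false, U) => (0, 1)
  | (false, D) => (0, -1)

lemma unitStep_injective : Function.Injective unitStep := by
  rintro ⟨_ | _, _ | _⟩ ⟨_ | _, _ | _⟩ h <;> simp_all [unitStep]

lemma range_unitStep :
    Set.range unitStep = ({(1,0), (-1,0), (0,1), (0,-1)} : Set (ℤ × ℤ)) := by
  ext v
  simp only [Set.mem_range, Set.mem_insert_iff, Set.mem_singleton_iff, Prod.exists,
    Bool.exists_bool]
  constructor
  · rintro (⟨_ | _, rfl⟩ | ⟨_ | _, rfl⟩) <;> simp [unitStep]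
  · rintro (rfl | rfl | rfl | rfl)
    exacts [Or.inr ⟨U, rfl⟩, Or.inr ⟨D, rfl⟩, Or.inl ⟨U, rfl⟩, Or.inl ⟨D, rfl⟩]

def axisWord (b : Bool) (l : List (Bool × DyckStep)) : List DyckStep :=
  l.filterMap fun s => if s.1 = b then some s.2 else none

lemma sum_map_unitStep (l : List (Bool × DyckStep)) :
    (l.map unitStep).sum = (dyckHeight (axisWord true l), dyckHeight (axisWord false l)) := by
  induction l with
  | nil => rfl
  | cons s l ih =>
    obtain ⟨_ | _, _ | _⟩ := s <;> simp [ih, axisWord, dyckHeight, unitStep] <;> ring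

section walk
variable {N : ℕ}

lemma partialSum_unitStep (c : Fin N → Bool × DyckStep) (j : Fin (N + 1)) :
    Fin.partialSum (unitStep ∘ c) j =
      (dyckHeight (axisWord true ((List.ofFn c).take j)),
        dyckHeight (axisWord false ((List.ofFn c).take j))) := by
  rw [Fin.partialSum, ← List.map_ofFn, ← List.map_take, sum_map_unitStep]

lemma quadrant_iff_isDyck (c : Fin N → Bool × DyckStep) :
    (Fin.partialSum (unitStep ∘ c) (Fin.last N) = (0, 0) ∧
      ∀ j, 0 ≤ (Fin.partialSum (unitStep ∘ c) j).1 ∧ 0 ≤ (Fin.partialSum (unitStep ∘ c) j).2) ↔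
    IsDyck (axisWord true (List.ofFn c)) ∧ IsDyck (axisWord false (List.ofFn c)) := by
  have hlen : (List.ofFn c).length = N := List.length_ofFn
  have prefixes (b : Bool) :
      (∀ j : Fin (N + 1), 0 ≤ dyckHeight (axisWord b ((List.ofFn c).take j))) ↔
        ∀ k, 0 ≤ dyckHeight ((axisWord b (List.ofFn c)).take k) :=
    (List.forall_take_fin_iff hlen fun l => 0 ≤ dyckHeight (axisWord b l)).trans
      (List.forall_filterMap_take_iff _ _ fun l => 0 ≤ dyckHeight l)
  simp only [partialSum_unitStep, Fin.val_last, List.take_of_length_le hlen.le, Prod.mk.injEq,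
    forall_and, prefixes, isDyck_iff_dyckHeight]
  tauto

lemma quadrantExcursions_eq_image :
    {w : Fin (N + 1) → ℤ × ℤ | w 0 = (0, 0) ∧ w (Fin.last N) = (0, 0) ∧
      (∀ i, 0 ≤ (w i).1 ∧ 0 ≤ (w i).2) ∧
      (∀ i : Fin N, w i.succ - w i.castSucc ∈ ({(1,0), (-1,0), (0,1), (0,-1)} : Set (ℤ × ℤ)))} =
    (fun c => Fin.partialSum (unitStep ∘ c)) ''
      {c | IsDyck (axisWord true (List.ofFn c)) ∧ IsDyck (axisWord false (List.ofFn c))} := by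
  ext w
  simp only [Set.mem_ofPred_eq, Set.mem_image, ← range_unitStep]
  constructor
  · rintro ⟨h₀, hlast, hquad, hsteps⟩
    obtain ⟨c, rfl⟩ := Fin.exists_partialSum_comp_eq h₀ hsteps
    exact ⟨c, (quadrant_iff_isDyck c).mp ⟨hlast, hquad⟩, rfl⟩
  · rintro ⟨c, hc, rfl⟩
    obtain ⟨hlast, hquad⟩ := (quadrant_iff_isDyck c).mpr hc
    refine ⟨Fin.partialSum_zero _, hlast, hquad, fun i => ⟨c i, ?_⟩⟩
    rw [sub_eq_neg_add, Fin.partialSum_right_neg, Function.comp_apply]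

lemma axisWord_ofFn (c : Fin N → Bool × DyckStep) (b : Bool) :
    axisWord b (List.ofFn c) =
      ((List.finRange N).filter fun i => (c i).1 = b).map fun i => (c i).2 := by
  rw [axisWord, List.ofFn_eq_map, List.filterMap_map, ← List.filterMap_eq_map,
    List.filterMap_filter]
  simp only [Function.comp_def, decide_eq_true_eq]

variable (N) in
def isDyckAxisWordsEquiv :
    {c : Fin N → Bool × DyckStep //
        IsDyck (axisWord true (List.ofFn c)) ∧ IsDyck (axisWord false (List.ofFn c))} ≃
      Σ S : Finset (Fin N), {u : Fin #S → DyckStep // IsDyck (List.ofFn u)} ×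
        {v : Fin #Sᶜ → DyckStep // IsDyck (List.ofFn v)} :=
  (axisSplit.subtypeEquiv (q := fun p => IsDyck (((List.finRange N).filter (· ∈ p.1)).map p.2) ∧
      IsDyck (((List.finRange N).filter (· ∉ p.1)).map p.2)) fun c => by
    simp [axisWord_ofFn, axisSplit]).trans <|
  (Equiv.subtypeProdEquivSigmaSubtype fun S d =>
      IsDyck (((List.finRange N).filter (· ∈ S)).map d) ∧
        IsDyck (((List.finRange N).filter (· ∉ S)).map d)).trans <|
  Equiv.sigmaCongrRight fun S =>
    ((splitAlong S).subtypeEquiv fun d => by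
      rw [ofFn_splitAlong_fst, ofFn_splitAlong_snd]).trans Equiv.subtypeProdEquivProd

variable (N) in
lemma card_quadrantExcursions :
    Nat.card {w : Fin (N + 1) → ℤ × ℤ //
      w 0 = (0, 0) ∧ w (Fin.last N) = (0, 0) ∧
      (∀ i, 0 ≤ (w i).1 ∧ 0 ≤ (w i).2) ∧
      (∀ i : Fin N, w i.succ - w i.castSucc ∈
        ({(1,0), (-1,0), (0,1), (0,-1)} : Set (ℤ × ℤ)))} =
    ∑ p ∈ antidiagonal N, N.choose p.1 * (numDyckWords p.1 * numDyckWords p.2) := by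
  rw [← Set.coe_ofPred, quadrantExcursions_eq_image,
    Nat.card_image_of_injective (Fin.partialSum_comp_injective unitStep_injective),
    Set.coe_ofPred, Nat.card_congr (isDyckAxisWordsEquiv N), Nat.card_sigma]
  simp only [Nat.card_prod, card_isDyck_ofFn]
  exact Finset.sum_card_card_compl N fun a b => numDyckWords a * numDyckWords b

end walk

lemma cast_catalan_eq_factorial_div (n : ℕ) :
    (catalan n : ℚ) = (2 * n)! / (n ! * (n + 1)!) := by
  have h := congrArg (fun m : ℕ => (m : ℚ)) (succ_mul_catalan_eq_centralBinom n)
  simp only [Nat.centralBinom_eq_two_mul_choose, Nat.cast_mul, two_mul, Nat.cast_add_choose] at h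
  rw [two_mul, Nat.factorial_succ, Nat.cast_mul, eq_div_iff (by positivity)]
  rw [eq_div_iff (by positivity)] at h
  push_cast at h ⊢
  linear_combination h

lemma choose_mul_catalan_mul_catalan (k l : ℕ) :
    ((k + l + 1) ^ 2 * (2 * (k + l)).choose (2 * k) * catalan k * catalan l : ℚ) =
      (2 * (k + l)).choose (k + l) * (k + l + 1).choose k * (k + l + 1).choose l := by
  rw [show 2 * (k + l) = 2 * k + 2 * l by ring,
    show (2 * k + 2 * l).choose (k + l) = ((k + l) + (k + l)).choose (k + l) by ring_nf,
    show (k + l + 1).choose k = (k + (l + 1)).choose k by ring_nf,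
    show (k + l + 1).choose l = (l + (k + 1)).choose l by ring_nf]
  simp only [Nat.cast_add_choose, cast_catalan_eq_factorial_div]
  rw [show k + (l + 1) = k + l + 1 by ring, show l + (k + 1) = k + l + 1 by ring,
    show (k + l) + (k + l) = 2 * k + 2 * l by ring]
  simp only [Nat.factorial_succ, Nat.cast_mul]
  field_simp
  push_cast
  ring

lemma catalan_mul_catalan_succ (n : ℕ) :
    ((n + 1) ^ 2 * catalan n * catalan (n + 1) : ℚ) =
      (2 * n).choose n * (2 * n + 2).choose n := by
  rw [show (2 * n).choose n = (n + n).choose n by ring_nf,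
    show (2 * n + 2).choose n = (n + (n + 2)).choose n by ring_nf]
  simp only [Nat.cast_add_choose, cast_catalan_eq_factorial_div]
  rw [show n + n = 2 * n by ring, show n + (n + 2) = 2 * n + 2 by ring,
    show 2 * (n + 1) = 2 * n + 2 by ring]
  simp only [Nat.factorial_succ, Nat.cast_mul]
  field_simp
  push_cast
  ring

theorem sum_antidiagonal_choose_mul_catalan_mul_catalan (n : ℕ) :
    ∑ p ∈ antidiagonal n, (2 * n).choose (2 * p.1) * catalan p.1 * catalan p.2 =
      catalan n * catalan (n + 1) := by
  have vandermonde := Nat.add_choose_eq (n + 1) (n + 1) n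
  rw [show n + 1 + (n + 1) = 2 * n + 2 by ring] at vandermonde
  have hn : ((n + 1) ^ 2 : ℚ) ≠ 0 := by positivity
  rw [← Nat.cast_inj (R := ℚ), ← mul_right_inj' hn]
  push_cast
  rw [Finset.mul_sum]
  calc ∑ p ∈ antidiagonal n,
        ((n + 1) ^ 2 : ℚ) * ((2 * n).choose (2 * p.1) * catalan p.1 * catalan p.2)
      = ∑ p ∈ antidiagonal n,
          ((2 * n).choose n * ((n + 1).choose p.1 * (n + 1).choose p.2) : ℚ) := by
        refine Finset.sum_congr rfl fun ⟨k, l⟩ hkl => ?_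
        rw [HasAntidiagonal.mem_antidiagonal] at hkl
        subst hkl
        have := choose_mul_catalan_mul_catalan k l
        push_cast at this ⊢
        linear_combination this
    _ = (n + 1) ^ 2 * (catalan n * catalan (n + 1)) := by
        rw [← Finset.mul_sum, ← mul_assoc, catalan_mul_catalan_succ, vandermonde]
        push_cast
        ring

theorem stmt_11_general (n : ℕ) :
    Nat.card {w : Fin (2*n+1) → ℤ × ℤ //
      w 0 = (0, 0) ∧ w (Fin.last (2*n)) = (0, 0) ∧
      (∀ i, 0 ≤ (w i).1 ∧ 0 ≤ (w i).2) ∧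
      (∀ i : Fin (2*n), w i.succ - w i.castSucc ∈
        ({(1,0), (-1,0), (0,1), (0,-1)} : Set (ℤ × ℤ)))} =
    catalan n * catalan (n+1) := by
  rw [card_quadrantExcursions, Finset.Nat.sum_antidiagonal_two_mul _
    (fun p hp => by rw [numDyckWords_of_odd hp, zero_mul, mul_zero]),
    ← sum_antidiagonal_choose_mul_catalan_mul_catalan]
  refine sum_congr rfl fun p _ => ?_
  rw [numDyckWords_two_mul, numDyckWords_two_mul, mul_assoc]

theorem stmt_11 (n : ℕ) (hn : 1 ≤ n) :
    Nat.card {w : Fin (2*n+1) → ℤ × ℤ //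
      w 0 = (0, 0) ∧ w (Fin.last (2*n)) = (0, 0) ∧
      (∀ i, 0 ≤ (w i).1 ∧ 0 ≤ (w i).2) ∧
      (∀ i : Fin (2*n), w i.succ - w i.castSucc ∈
        ({(1,0), (-1,0), (0,1), (0,-1)} : Set (ℤ × ℤ)))} =
    catalan n * catalan (n+1) :=
  stmt_11_general n
end

section
/- The equation √(36x + 3)/4 + sin(2π·√(12x + 1)/3) = 0 has exactly one solution x in the open interval (1/4, 2/3). -/
/-!
Substituting `t = √(12x + 1)`, which maps `(1/4, 2/3)` increasingly onto `(2, 3)`, the equation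
becomes `f t = 0` with `f t = √3/4 · t + sin (2πt/3)` (`backboneFn`). On `[3/2, 3]` we have
`f'' = -(2π/3)² sin (2πt/3) > 0`, so `f` is strictly convex there; since `f 2 = 0`, `f` has at
most one further zero to the right of `2`, and one exists in `(9/4, 3)` by the intermediate value
theorem, as `f (9/4) < 0 < f 3`.
-/

open Real Set

theorem StrictConvexOn.eq_of_apply_eq_zero {𝕜 : Type*} [Field 𝕜] [LinearOrder 𝕜]
    [IsStrictOrderedRing 𝕜] {s : Set 𝕜} {f : 𝕜 → 𝕜} (hf : StrictConvexOn 𝕜 s f) {a x y : 𝕜}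
    (ha : a ∈ s) (hx : x ∈ s) (hy : y ∈ s) (hax : a < x) (hay : a < y)
    (hfa : f a = 0) (hfx : f x = 0) (hfy : f y = 0) : x = y := by
  by_contra hxy
  rcases lt_or_gt_of_ne hxy with hxy | hxy
  · simpa [hfa, hfx, hfy] using hf.secant_strict_mono ha hx hy hax.ne' hay.ne' hxy
  · simpa [hfa, hfx, hfy] using hf.secant_strict_mono ha hy hx hay.ne' hax.ne' hxy

noncomputable def backboneFn (t : ℝ) : ℝ := √3 / 4 * t + sin (2 * π / 3 * t)

theorem hasDerivAt_sin_mul (c t : ℝ) :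
    HasDerivAt (fun t ↦ sin (c * t)) (c * cos (c * t)) t := by
  simpa [mul_comm] using ((hasDerivAt_id t).const_mul c).sin

theorem hasDerivAt_cos_mul (c t : ℝ) :
    HasDerivAt (fun t ↦ cos (c * t)) (-c * sin (c * t)) t := by
  simpa [mul_comm] using ((hasDerivAt_id t).const_mul c).cos

theorem hasDerivAt_backboneFn (t : ℝ) :
    HasDerivAt backboneFn (√3 / 4 + 2 * π / 3 * cos (2 * π / 3 * t)) t := by
  have h := ((hasDerivAt_id' t).const_mul (√3 / 4)).add (hasDerivAt_sin_mul (2 * π / 3) t)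
  rwa [mul_one] at h

theorem deriv_backboneFn :
    deriv backboneFn = fun t ↦ √3 / 4 + 2 * π / 3 * cos (2 * π / 3 * t) :=
  funext fun t ↦ (hasDerivAt_backboneFn t).deriv

theorem iterate_deriv_two_backboneFn (t : ℝ) :
    deriv^[2] backboneFn t = -(2 * π / 3) ^ 2 * sin (2 * π / 3 * t) := by
  have h := ((hasDerivAt_cos_mul (2 * π / 3) t).const_mul (2 * π / 3)).const_add (√3 / 4)
  rw [Function.iterate_succ_apply, Function.iterate_one, deriv_backboneFn, h.deriv]
  ring

theorem strictConvexOn_backboneFn : StrictConvexOn ℝ (Icc (3 / 2) 3) backboneFn := by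
  refine strictConvexOn_of_deriv2_pos (convex_Icc _ _)
    (by unfold backboneFn; fun_prop) fun t ht ↦ ?_
  rw [interior_Icc] at ht
  rw [iterate_deriv_two_backboneFn, ← sin_sub_two_pi]
  have : sin (2 * π / 3 * t - 2 * π) < 0 :=
    sin_neg_of_neg_of_neg_pi_lt (by nlinarith [pi_pos, ht.2]) (by nlinarith [pi_pos, ht.1])
  have : 0 < (2 * π / 3) ^ 2 := by positivity
  nlinarith

theorem backboneFn_two : backboneFn 2 = 0 := by
  rw [backboneFn, show 2 * π / 3 * 2 = π / 3 + π by ring, sin_add_pi, sin_pi_div_three]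
  ring

theorem backboneFn_nine_div_four_neg : backboneFn (9 / 4) < 0 := by
  rw [backboneFn, show 2 * π / 3 * (9 / 4) = π / 2 + π by ring, sin_add_pi, sin_pi_div_two]
  have : √3 < 16 / 9 := (sqrt_lt' (by norm_num)).2 (by norm_num)
  linarith

theorem backboneFn_three_pos : 0 < backboneFn 3 := by
  rw [backboneFn, show 2 * π / 3 * 3 = 2 * π by ring, sin_two_pi]
  positivity

theorem existsUnique_backboneFn_eq_zero : ∃! t, t ∈ Ioo (2 : ℝ) 3 ∧ backboneFn t = 0 := by
  obtain ⟨t, ⟨ht, ht'⟩, hft⟩ : ∃ t ∈ Ioo (9 / 4 : ℝ) 3, backboneFn t = 0 :=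
    intermediate_value_Ioo (by norm_num) (by unfold backboneFn; fun_prop)
      ⟨backboneFn_nine_div_four_neg, backboneFn_three_pos⟩
  refine ⟨t, ⟨⟨by linarith, ht'⟩, hft⟩, fun s ⟨⟨hs, hs'⟩, hfs⟩ ↦ ?_⟩
  exact strictConvexOn_backboneFn.eq_of_apply_eq_zero (a := 2) (by norm_num)
    ⟨by linarith, hs'.le⟩ ⟨by linarith, ht'.le⟩ hs (by linarith) backboneFn_two hfs hft

theorem backboneFn_sqrt (x : ℝ) :
    backboneFn √(12 * x + 1) = √(36 * x + 3) / 4 + sin (2 * π * √(12 * x + 1) / 3) := by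
  rw [backboneFn, show 36 * x + 3 = 3 * (12 * x + 1) by ring, sqrt_mul (by norm_num)]
  ring_nf

theorem sqrt_mem_Ioo_two_three {x : ℝ} (hx : x ∈ Ioo (1 / 4 : ℝ) (2 / 3)) :
    √(12 * x + 1) ∈ Ioo (2 : ℝ) 3 :=
  ⟨(lt_sqrt (by norm_num)).2 (by linarith [hx.1]), (sqrt_lt' (by norm_num)).2 (by linarith [hx.2])⟩

theorem stmt_12 :
    ∃! x : ℝ, x ∈ Set.Ioo (1/4 : ℝ) (2/3 : ℝ) ∧
      Real.sqrt (36 * x + 3) / 4 + Real.sin (2 * Real.pi * Real.sqrt (12 * x + 1) / 3) = 0 := by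
  obtain ⟨t, ⟨ht, hft⟩, huniq⟩ := existsUnique_backboneFn_eq_zero
  have hsqrt : √(12 * ((t ^ 2 - 1) / 12) + 1) = t := by
    rw [show 12 * ((t ^ 2 - 1) / 12) + 1 = t ^ 2 by ring, sqrt_sq (by linarith [ht.1])]
  refine ⟨(t ^ 2 - 1) / 12, ⟨⟨by nlinarith [ht.1], by nlinarith [ht.1, ht.2]⟩, ?_⟩, ?_⟩
  · rw [← backboneFn_sqrt, hsqrt, hft]
  · rintro x ⟨hx, hfx⟩
    have hxt : √(12 * x + 1) = t :=
      huniq _ ⟨sqrt_mem_Ioo_two_three hx, (backboneFn_sqrt x).trans hfx⟩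
    have hsq := sq_sqrt (show 0 ≤ 12 * x + 1 by linarith [hx.1])
    rw [hxt] at hsq
    linarith
end
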